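/- arXiv:quant-ph/0409121 — 3 statements merged into one kernel-verified Lean document; each statement's English description precedes it below -/
import Mathlib

section
/- For elements X and Y of a Banach algebra, exp(t(X+Y)) = lim_{n→∞} (exp(tX/n) · exp(tY/n))^n (Lie–Trotter product formula). -/
/-!
Writing `P s = exp (s • X) * exp (s • Y)` and `Q s = exp (s • (X + Y))`, both curves have
derivative `X + Y` at `0`, so `P s - Q s = o(s)`. Telescoping
`P^n - Q^n = ∑ P^k (P - Q) Q^(n-1-k)` with `‖P (t/n)‖, ‖Q (t/n)‖ ≤ exp (|t| (‖X‖ + ‖Y‖) / n)`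
gives `‖P (t/n) ^ n - exp (t • (X + Y))‖ ≤ exp (|t| (‖X‖ + ‖Y‖)) · n ‖P (t/n) - Q (t/n)‖ → 0`.
These norm bounds need `‖1‖ = 1`; a general Banach algebra embeds into its algebra of
continuous operators, which has this property, through left multiplication.
-/

open NormedSpace Filter Topology Asymptotics

theorem norm_pow_sub_pow_le {R : Type*} [NormedRing R] [NormOneClass R] {p q : R} {M : ℝ}
    (hp : ‖p‖ ≤ M) (hq : ‖q‖ ≤ M) (n : ℕ) :
    ‖p ^ n - q ^ n‖ ≤ n * M ^ (n - 1) * ‖p - q‖ := by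
  induction n with
  | zero => simp
  | succ n ih =>
    have hpn : ‖p ^ n‖ ≤ M ^ n :=
      (norm_pow_le p n).trans (pow_le_pow_left₀ (norm_nonneg p) hp n)
    have hM : n * M ^ (n - 1) * M = n * M ^ n := by
      rcases n with _ | n <;> simp [pow_succ, mul_assoc]
    calc ‖p ^ (n + 1) - q ^ (n + 1)‖ = ‖p ^ n * (p - q) + (p ^ n - q ^ n) * q‖ := by
          congr 1; noncomm_ring
      _ ≤ ‖p ^ n‖ * ‖p - q‖ + ‖p ^ n - q ^ n‖ * ‖q‖ :=
          (norm_add_le _ _).trans (add_le_add (norm_mul_le _ _) (norm_mul_le _ _))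
      _ ≤ M ^ n * ‖p - q‖ + n * M ^ (n - 1) * ‖p - q‖ * M := by
          have hM0 : 0 ≤ M := (norm_nonneg p).trans hp
          gcongr
      _ = (n + 1 : ℕ) * M ^ (n + 1 - 1) * ‖p - q‖ := by
          rw [mul_right_comm, hM]; push_cast; ring

section BanachAlgebra

variable {A : Type*} [NormedRing A] [NormedAlgebra ℝ A]

noncomputable def mulLeftAlgHom : A →ₐ[ℝ] A →L[ℝ] A :=
  AlgHom.ofLinearMap (ContinuousLinearMap.mul ℝ A) (ContinuousLinearMap.ext one_mul)
    fun x y => ContinuousLinearMap.ext (mul_assoc x y)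

variable [CompleteSpace A]

theorem mulLeftAlgHom_exp (x : A) : mulLeftAlgHom (exp x) = exp (mulLeftAlgHom x) :=
  map_exp_of_mem_ball (𝕂 := ℝ) mulLeftAlgHom (ContinuousLinearMap.mul ℝ A).continuous x
    ((expSeries_radius_eq_top ℝ A).symm ▸ edist_lt_top _ _)

theorem isLittleO_exp_smul_mul_exp_smul_sub_exp_smul_add (X Y : A) :
    (fun s : ℝ => exp (s • X) * exp (s • Y) - exp (s • (X + Y))) =o[𝓝 0] fun s => s := by
  have hderiv := ((hasDerivAt_exp_smul_const X (0 : ℝ)).mul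
    (hasDerivAt_exp_smul_const' Y 0)).sub (hasDerivAt_exp_smul_const (X + Y) (0 : ℝ))
  simpa using hasDerivAt_iff_isLittleO_nhds_zero.1 hderiv

theorem tendsto_nat_mul_norm_exp_smul_mul_exp_smul_sub_exp_smul_add (X Y : A) (t : ℝ) :
    Tendsto (fun n : ℕ => n * ‖exp ((t / n) • X) * exp ((t / n) • Y) - exp ((t / n) • (X + Y))‖)
      atTop (𝓝 0) := by
  have hsmall := (isLittleO_exp_smul_mul_exp_smul_sub_exp_smul_add X Y).comp_tendsto
    (tendsto_const_div_atTop_nhds_zero_nat t)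
  have hlin : (fun n : ℕ => t / n) =O[atTop] fun n : ℕ => (n : ℝ)⁻¹ := by
    simpa only [div_eq_mul_inv] using isBigO_const_mul_self t _ atTop
  simpa [div_inv_eq_mul, mul_comm] using
    (hsmall.trans_isBigO hlin).norm_left.tendsto_div_nhds_zero

variable [NormOneClass A]

theorem norm_exp_le_exp_norm (x : A) : ‖exp x‖ ≤ Real.exp ‖x‖ := by
  rw [← (exp_series_hasSum_exp' (𝕂 := ℝ) x).tsum_eq]
  refine tsum_of_norm_bounded (Real.exp_eq_exp_ℝ ▸ expSeries_div_hasSum_exp ‖x‖) fun n => ?_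
  rw [norm_smul, norm_inv, RCLike.norm_natCast, inv_mul_eq_div]
  gcongr
  exact norm_pow_le x n

theorem norm_exp_smul_mul_exp_smul_pow_sub_le (X Y : A) (s : ℝ) (n : ℕ) :
    ‖(exp (s • X) * exp (s • Y)) ^ n - exp (s • (X + Y)) ^ n‖ ≤
      Real.exp (n * (|s| * (‖X‖ + ‖Y‖))) *
        (n * ‖exp (s • X) * exp (s • Y) - exp (s • (X + Y))‖) := by
  set M := Real.exp (|s| * (‖X‖ + ‖Y‖))
  have hprod : ‖exp (s • X) * exp (s • Y)‖ ≤ M := by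
    calc ‖exp (s • X) * exp (s • Y)‖ ≤ Real.exp ‖s • X‖ * Real.exp ‖s • Y‖ :=
          (norm_mul_le _ _).trans (mul_le_mul (norm_exp_le_exp_norm _) (norm_exp_le_exp_norm _)
            (norm_nonneg _) (Real.exp_pos _).le)
      _ = M := by rw [← Real.exp_add, norm_smul, norm_smul, Real.norm_eq_abs, ← mul_add]
  have hsum : ‖exp (s • (X + Y))‖ ≤ M := by
    refine (norm_exp_le_exp_norm _).trans (Real.exp_le_exp.2 ?_)
    rw [norm_smul, Real.norm_eq_abs]
    gcongr
    exact norm_add_le X Y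
  calc _ ≤ n * M ^ (n - 1) * ‖exp (s • X) * exp (s • Y) - exp (s • (X + Y))‖ :=
        norm_pow_sub_pow_le hprod hsum n
    _ ≤ n * M ^ n * ‖exp (s • X) * exp (s • Y) - exp (s • (X + Y))‖ := by
        gcongr
        exacts [Real.one_le_exp (by positivity), n.sub_le 1]
    _ = _ := by rw [Real.exp_nat_mul]; ring

theorem tendsto_exp_smul_mul_exp_smul_pow_of_normOneClass (X Y : A) (t : ℝ) :
    Tendsto (fun n : ℕ => (exp ((t / n) • X) * exp ((t / n) • Y)) ^ n)
      atTop (𝓝 (exp (t • (X + Y)))) := by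
  let _ : NormedAlgebra ℚ A := .restrictScalars ℚ ℝ A
  have hbound : ∀ n : ℕ, n ≠ 0 →
      ‖(exp ((t / n) • X) * exp ((t / n) • Y)) ^ n - exp (t • (X + Y))‖ ≤
        Real.exp (|t| * (‖X‖ + ‖Y‖)) *
          (n * ‖exp ((t / n) • X) * exp ((t / n) • Y) - exp ((t / n) • (X + Y))‖) := by
    intro n hn
    have hn' : (n : ℝ) ≠ 0 := Nat.cast_ne_zero.2 hn
    have hpow : exp ((t / n) • (X + Y)) ^ n = exp (t • (X + Y)) := by
      rw [← exp_nsmul, ← Nat.cast_smul_eq_nsmul ℝ, smul_smul, mul_div_cancel₀ _ hn']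
    have hrate : (n : ℝ) * (|t / n| * (‖X‖ + ‖Y‖)) = |t| * (‖X‖ + ‖Y‖) := by
      rw [abs_div, Nat.abs_cast]; field_simp
    simpa only [hpow, hrate] using norm_exp_smul_mul_exp_smul_pow_sub_le X Y (t / n) n
  have hlim := (tendsto_nat_mul_norm_exp_smul_mul_exp_smul_sub_exp_smul_add X Y t).const_mul
    (Real.exp (|t| * (‖X‖ + ‖Y‖)))
  rw [mul_zero] at hlim
  rw [tendsto_iff_norm_sub_tendsto_zero]
  refine squeeze_zero' (.of_forall fun _ => norm_nonneg _) ?_ hlim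
  filter_upwards [eventually_ne_atTop 0] with n hn using hbound n hn

end BanachAlgebra

/-- Lie–Trotter product formula in a Banach algebra:
`exp(t(X+Y)) = lim_{n→∞} (exp(tX/n) · exp(tY/n))^n`. -/
theorem trotter_product_formula {A : Type*} [NormedRing A] [NormedAlgebra ℝ A]
    [CompleteSpace A] (X Y : A) (t : ℝ) :
    Tendsto (fun n : ℕ => (exp ((t / n) • X) * exp ((t / n) • Y)) ^ n)
      atTop (𝓝 (exp (t • (X + Y)))) := by
  rcases subsingleton_or_nontrivial A with _ | _
  · exact tendsto_const_nhds.congr fun _ => Subsingleton.elim _ _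
  have h := tendsto_exp_smul_mul_exp_smul_pow_of_normOneClass
    (mulLeftAlgHom X) (mulLeftAlgHom Y) t
  simp only [← map_smul, ← map_add, ← mulLeftAlgHom_exp, ← map_mul, ← map_pow] at h
  simpa [mulLeftAlgHom, Function.comp_def] using ((continuous_eval_const (1 : A)).tendsto _).comp h
end

section
/- For elements X and Y of a Banach algebra and s ≥ 0, exp(s[X,Y]) = lim_{n→∞} (exp(√(s/n) X) · exp(√(s/n) Y) · exp(−√(s/n) X) · exp(−√(s/n) Y))^n, where [X,Y] = XY − YX. -/
/-! Since `exp (t • Z) = 1 + t • Z + o(t)`, the group commutator of `exp (t • X)` and `exp (t • Y)`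
is `1 + t² • [X, Y] + o(t²)`; with `t = √(s / n)` the `n`-th factor `aₙ` therefore satisfies
`n • (aₙ - 1) → s • [X, Y]`. A Chernoff-type lemma turns this into `aₙ ^ n → exp (s • [X, Y])`:
compare `aₙ ^ n` with `exp (n⁻¹ • c) ^ n = exp c` by telescoping, all powers `aₙ ^ k` with `k ≤ n`
being uniformly bounded. -/

open NormedSpace Filter Topology

theorem pow_sub_pow_eq_sum {R : Type*} [Ring R] (a b : R) (n : ℕ) :
    a ^ n - b ^ n = ∑ j ∈ Finset.range n, a ^ j * (a - b) * b ^ (n - 1 - j) := by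
  induction n with
  | zero => simp
  | succ n ih =>
    have hshift : ∀ j ∈ Finset.range n,
        a ^ j * (a - b) * b ^ (n + 1 - 1 - j) = a ^ j * (a - b) * b ^ (n - 1 - j) * b := by
      intro j hj
      rw [show n + 1 - 1 - j = n - 1 - j + 1 by grind, pow_succ, ← mul_assoc]
    rw [Finset.sum_range_succ, Finset.sum_congr rfl hshift, ← Finset.sum_mul, ← ih,
      show n + 1 - 1 - n = 0 by omega, pow_succ, pow_succ]
    noncomm_ring

theorem mul_mul_mul_sub_one_eq_of_mul_eq_one {R : Type*} [Ring R] {g g' h h' : R} (hg : g * g' = 1)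
    (hh : h * h' = 1) : g * h * g' * h' - 1 = (g * h - h * g) * (g' * h') := by
  rw [sub_mul, ← mul_assoc, ← mul_assoc, mul_assoc h, hg, mul_one, hh]

section NormedRing

variable {A : Type*} [NormedRing A]

theorem norm_pow_sub_pow_le_s1 {a b : A} {n : ℕ} {K : ℝ} (ha : ∀ k < n, ‖a ^ k‖ ≤ K)
    (hb : ∀ k < n, ‖b ^ k‖ ≤ K) : ‖a ^ n - b ^ n‖ ≤ n * K ^ 2 * ‖a - b‖ := by
  rw [pow_sub_pow_eq_sum]
  calc ‖∑ j ∈ Finset.range n, a ^ j * (a - b) * b ^ (n - 1 - j)‖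
      ≤ ∑ j ∈ Finset.range n, K * ‖a - b‖ * K := by
        refine (norm_sum_le _ _).trans (Finset.sum_le_sum fun j hj => ?_)
        rw [Finset.mem_range] at hj
        have hK : 0 ≤ K := (norm_nonneg _).trans (ha 0 (by omega))
        refine (norm_mul₃_le ..).trans ?_
        gcongr
        · exact ha j hj
        · exact hb _ (by omega)
    _ = n * K ^ 2 * ‖a - b‖ := by
        rw [Finset.sum_const, Finset.card_range, nsmul_eq_mul]; ring

theorem norm_one_add_pow_le (e : A) (k : ℕ) : ‖(1 + e) ^ k‖ ≤ ‖(1 : A)‖ * (1 + ‖e‖) ^ k := by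
  induction k with
  | zero => simp
  | succ k ih =>
    calc ‖(1 + e) ^ (k + 1)‖ = ‖(1 + e) ^ k + (1 + e) ^ k * e‖ := by
          rw [pow_succ, mul_add, mul_one]
      _ ≤ ‖(1 + e) ^ k‖ * (1 + ‖e‖) := by
        rw [mul_one_add]; exact (norm_add_le _ _).trans (by gcongr; exact norm_mul_le _ _)
      _ ≤ ‖(1 : A)‖ * (1 + ‖e‖) ^ (k + 1) := by
        rw [pow_succ, ← mul_assoc]; gcongr

theorem norm_pow_le_of_norm_sub_one_le {x : A} {M : ℝ} {n k : ℕ} (hM : 0 ≤ M) (hk : k ≤ n)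
    (hx : ‖x - 1‖ ≤ M / n) : ‖x ^ k‖ ≤ ‖(1 : A)‖ * Real.exp M := by
  have hkM : k * (M / n) ≤ M := by
    rcases Nat.eq_zero_or_pos n with rfl | hn
    · simpa [Nat.le_zero.mp hk] using hM
    · calc k * (M / n) ≤ n * (M / n) := by gcongr
        _ = M := by field_simp
  calc ‖x ^ k‖ = ‖(1 + (x - 1)) ^ k‖ := by rw [add_sub_cancel]
    _ ≤ ‖(1 : A)‖ * (1 + M / n) ^ k := (norm_one_add_pow_le _ k).trans (by gcongr)
    _ ≤ ‖(1 : A)‖ * Real.exp M := by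
      gcongr
      calc (1 + M / n) ^ k ≤ Real.exp (M / n) ^ k := by
            gcongr; linarith [Real.add_one_le_exp (M / n)]
        _ = Real.exp (k * (M / n)) := (Real.exp_nat_mul _ k).symm
        _ ≤ Real.exp M := Real.exp_le_exp.mpr hkM

end NormedRing

section NormedAlgebra

variable {A : Type*} [NormedRing A] [NormedAlgebra ℝ A]

theorem eventually_norm_pow_le_of_tendsto_smul_sub_one {a : ℕ → A} {c : A}
    (h : Tendsto (fun n : ℕ => (n : ℝ) • (a n - 1)) atTop (𝓝 c)) :
    ∀ᶠ n in atTop, ∀ k ≤ n, ‖a n ^ k‖ ≤ ‖(1 : A)‖ * Real.exp (‖c‖ + 1) := by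
  filter_upwards [h.norm.eventually_lt_const (lt_add_one ‖c‖), eventually_ge_atTop 1]
    with n hlt hn k hk
  refine norm_pow_le_of_norm_sub_one_le (by positivity) hk ?_
  rw [norm_smul, Real.norm_natCast] at hlt
  rw [le_div_iff₀ (by exact_mod_cast hn), mul_comm]
  exact hlt.le

variable [CompleteSpace A]

theorem tendsto_inv_smul_exp_smul_sub_one (c : A) :
    Tendsto (fun t : ℝ => t⁻¹ • (exp (t • c) - 1)) (𝓝[≠] 0) (𝓝 c) := by
  have hd : HasDerivAt (fun t : ℝ => exp (t • c)) c 0 := by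
    simpa using hasDerivAt_exp_smul_const (𝕂 := ℝ) c 0
  refine (hasDerivAt_iff_tendsto_slope.mp hd).congr fun t => ?_
  simp [slope_def_module]

theorem tendsto_pow_exp_of_tendsto_smul_sub_one {a : ℕ → A} {c : A}
    (h : Tendsto (fun n : ℕ => (n : ℝ) • (a n - 1)) atTop (𝓝 c)) :
    Tendsto (fun n => a n ^ n) atTop (𝓝 (exp c)) := by
  -- `exp_nsmul` is stated for `ℚ`-algebras
  let : NormedAlgebra ℚ A := .restrictScalars ℚ ℝ A
  set b : ℕ → A := fun n => exp ((n : ℝ)⁻¹ • c)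
  have hinv : Tendsto (fun n : ℕ => (n : ℝ)⁻¹) atTop (𝓝[≠] 0) :=
    (tendsto_inv_atTop_nhdsGT_zero.comp tendsto_natCast_atTop_atTop).mono_right
      (nhdsGT_le_nhdsNE 0)
  have hb : Tendsto (fun n : ℕ => (n : ℝ) • (b n - 1)) atTop (𝓝 c) :=
    ((tendsto_inv_smul_exp_smul_sub_one c).comp hinv).congr fun n => by simp [b]
  have hbn : ∀ n ≠ 0, b n ^ n = exp c := fun n hn => by
    rw [← exp_nsmul, ← Nat.cast_smul_eq_nsmul ℝ, smul_smul, mul_inv_cancel₀ (by simpa), one_smul]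
  have hab : Tendsto (fun n : ℕ => ‖(n : ℝ) • (a n - b n)‖) atTop (𝓝 0) := by
    simpa [← smul_sub] using (h.sub hb).norm
  set K := ‖(1 : A)‖ * Real.exp (‖c‖ + 1)
  have hpow : ∀ᶠ n in atTop, ‖a n ^ n - exp c‖ ≤ K ^ 2 * ‖(n : ℝ) • (a n - b n)‖ := by
    filter_upwards [eventually_norm_pow_le_of_tendsto_smul_sub_one h,
      eventually_norm_pow_le_of_tendsto_smul_sub_one hb, eventually_ne_atTop 0]
      with n ha hb hn
    rw [← hbn n hn, norm_smul, Real.norm_natCast, mul_left_comm, ← mul_assoc]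
    exact norm_pow_sub_pow_le_s1 (fun k hk => ha k hk.le) (fun k hk => hb k hk.le)
  rw [← tendsto_sub_nhds_zero_iff, tendsto_zero_iff_norm_tendsto_zero]
  exact squeeze_zero' (.of_forall fun _ => norm_nonneg _) hpow
    (by simpa using hab.const_mul (K ^ 2))

theorem tendsto_inv_sq_smul_exp_commutator_sub_one (X Y : A) :
    Tendsto (fun t : ℝ => (t ^ 2)⁻¹ •
        (exp (t • X) * exp (t • Y) * exp (-(t • X)) * exp (-(t • Y)) - 1))
      (𝓝[≠] 0) (𝓝 (X * Y - Y * X)) := by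
  let : NormedAlgebra ℚ A := .restrictScalars ℚ ℝ A
  set S : A → ℝ → A := fun Z t => t⁻¹ • (exp (t • Z) - 1)
  have hS : ∀ Z, Tendsto (S Z) (𝓝[≠] 0) (𝓝 Z) := tendsto_inv_smul_exp_smul_sub_one
  have hneg : Tendsto (fun t : ℝ => exp (-(t • X)) * exp (-(t • Y))) (𝓝[≠] 0) (𝓝 1) := by
    have hc : Continuous fun t : ℝ => exp (-(t • X)) * exp (-(t • Y)) := by fun_prop
    simpa using (hc.tendsto 0).mono_left nhdsWithin_le_nhds
  have hlim := (((hS X).mul (hS Y)).sub ((hS Y).mul (hS X))).mul hneg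
  rw [mul_one] at hlim
  refine hlim.congr' ?_
  filter_upwards [self_mem_nhdsWithin] with t (ht : t ≠ 0)
  have hexp : ∀ Z, exp (t • Z) = 1 + t • S Z t := fun Z => by simp [S, smul_inv_smul₀ ht]
  have hexp_neg : ∀ Z : A, exp (t • Z) * exp (-(t • Z)) = 1 := fun Z => by
    rw [← exp_add_of_commute (Commute.refl _).neg_right, add_neg_cancel, exp_zero]
  have hcomm : exp (t • X) * exp (t • Y) - exp (t • Y) * exp (t • X)
      = t ^ 2 • (S X t * S Y t - S Y t * S X t) := by
    rw [hexp X, hexp Y]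
    simp only [mul_add, add_mul, one_mul, mul_one, smul_mul_smul_comm, smul_sub]
    module
  rw [mul_mul_mul_sub_one_eq_of_mul_eq_one (hexp_neg X) (hexp_neg Y), hcomm, smul_mul_assoc (t ^ 2),
    inv_smul_smul₀ (pow_ne_zero 2 ht)]

end NormedAlgebra

/-- Commutator Trotter formula in a Banach algebra: for `s ≥ 0`,
`exp(s[X,Y]) = lim_{n→∞} (exp(√(s/n)X) exp(√(s/n)Y) exp(−√(s/n)X) exp(−√(s/n)Y))^n`. -/
theorem trotter_commutator_formula {A : Type*} [NormedRing A] [NormedAlgebra ℝ A]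
    [CompleteSpace A] (X Y : A) (s : ℝ) (hs : 0 ≤ s) :
    Tendsto (fun n : ℕ =>
        (exp (Real.sqrt (s / n) • X) * exp (Real.sqrt (s / n) • Y) *
          exp (-(Real.sqrt (s / n) • X)) * exp (-(Real.sqrt (s / n) • Y))) ^ n)
      atTop (𝓝 (exp (s • (X * Y - Y * X)))) := by
  rcases hs.eq_or_lt with rfl | hs
  · simp
  have ht : Tendsto (fun n : ℕ => Real.sqrt (s / n)) atTop (𝓝[≠] 0) := by
    refine tendsto_nhdsWithin_iff.mpr ⟨?_, ?_⟩
    · simpa using (tendsto_const_nhds.div_atTop tendsto_natCast_atTop_atTop).sqrt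
    · filter_upwards [eventually_gt_atTop 0] with n hn
      exact (Real.sqrt_pos.mpr (by positivity)).ne'
  apply tendsto_pow_exp_of_tendsto_smul_sub_one
  refine (((tendsto_inv_sq_smul_exp_commutator_sub_one X Y).comp ht).const_smul s).congr' ?_
  filter_upwards [eventually_gt_atTop 0] with n hn
  rw [Function.comp_apply, Real.sq_sqrt (by positivity), smul_smul, inv_div,
    mul_div_cancel₀ _ hs.ne']
end

section
/- In a Banach algebra, the map t ↦ exp(tA)·exp(tB)·exp(−tA)·exp(−tB) equals 1 + t²[A,B] + o(t²) as t → 0; i.e., lim_{t→0} (exp(tA)exp(tB)exp(−tA)exp(−tB) − 1 − t²[A,B]) / t² = 0. -/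
/-!
Writing `a = exp (tX)`, `b = exp (tY)`, one has `a b a⁻¹ b⁻¹ - 1 = (a b - b a) a⁻¹ b⁻¹`, and
`a⁻¹ b⁻¹ → 1`. Since `a - 1 = tX + O(t²)` and `b - 1 = tY + O(t²)`, the additive commutator
`a b - b a = (a - 1)(b - 1) - (b - 1)(a - 1)` equals `t²[X, Y] + O(t³)`.
-/

open NormedSpace Filter Topology Asymptotics

section Exp

variable {A : Type*} [NormedRing A] [NormedAlgebra ℚ A] [CompleteSpace A]

theorem isBigO_exp_sub_one_sub : (fun x : A => exp x - 1 - x) =O[𝓝 0] fun x => ‖x‖ ^ 2 := by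
  simpa [FormalMultilinearSeries.partialSum, Finset.sum_range_succ, expSeries_apply_eq, sub_sub]
    using (exp_hasFPowerSeriesAt_zero (𝕂 := ℚ) (𝔸 := A)).isBigO_sub_partialSum_pow 2

theorem isBigO_exp_smul_sub_one_sub_smul {𝕜 : Type*} [NormedField 𝕜] [NormedSpace 𝕜 A] (Z : A) :
    (fun t : 𝕜 => exp (t • Z) - 1 - t • Z) =O[𝓝 0] fun t => t ^ 2 := by
  have hZ : Tendsto (fun t : 𝕜 => t • Z) (𝓝 0) (𝓝 0) := by
    simpa using (tendsto_id (x := 𝓝 (0 : 𝕜))).smul_const Z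
  refine (isBigO_exp_sub_one_sub.comp_tendsto hZ).trans (IsBigO.of_bound (‖Z‖ ^ 2) ?_)
  filter_upwards with t
  simp only [Function.comp_apply, norm_pow, norm_norm]
  calc ‖t • Z‖ ^ 2 ≤ (‖t‖ * ‖Z‖) ^ 2 := by gcongr; exact norm_smul_le t Z
    _ = ‖Z‖ ^ 2 * ‖t‖ ^ 2 := by ring

end Exp

section Commutator

variable {𝕜 A : Type*} [NontriviallyNormedField 𝕜] [NormedRing A] [NormedAlgebra 𝕜 A]

theorem isBigO_mul_sub_sq_smul_mul {f g : 𝕜 → A} {X Y : A}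
    (hf : (fun t => f t - t • X) =O[𝓝 0] fun t => t ^ 2)
    (hg : (fun t => g t - t • Y) =O[𝓝 0] fun t => t ^ 2) :
    (fun t => f t * g t - t ^ 2 • (X * Y)) =O[𝓝 0] fun t => t ^ 3 := by
  have hsmul (Z : A) : (fun t : 𝕜 => t • Z) =O[𝓝 0] fun t => t :=
    ((isBigO_refl (fun t : 𝕜 => t) _).smul (isBigO_const_one 𝕜 Z _)).congr_right fun t => mul_one t
  have hf₁ : f =O[𝓝 0] fun t => t := by
    simpa using ((hf.trans (isLittleO_pow_pow one_lt_two).isBigO).congr_right fun t => pow_one t).add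
      (hsmul X)
  refine ((hf₁.mul hg).add ((hf.mul (hsmul Y)).congr_right fun t => mul_comm _ _)).congr
    (fun t => ?_) (fun t => by ring)
  simp only [mul_sub, sub_mul, mul_smul_comm, smul_mul_assoc]
  module

theorem isLittleO_commutator_sub_sq_smul_commutator {f g : 𝕜 → A} {X Y : A}
    (hf : (fun t => f t - 1 - t • X) =O[𝓝 0] fun t => t ^ 2)
    (hg : (fun t => g t - 1 - t • Y) =O[𝓝 0] fun t => t ^ 2) :
    (fun t => f t * g t - g t * f t - t ^ 2 • (X * Y - Y * X)) =o[𝓝 0] fun t => t ^ 2 := by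
  have hfg := isBigO_mul_sub_sq_smul_mul hf hg
  have hgf := isBigO_mul_sub_sq_smul_mul hg hf
  refine ((hfg.sub hgf).trans_isLittleO (isLittleO_pow_pow (by norm_num))).congr_left fun t => ?_
  simp only [smul_sub]
  noncomm_ring

end Commutator

theorem Asymptotics.IsLittleO.mul_tendsto_one_sub_smul {𝕜 A α : Type*} [NormedField 𝕜]
    [NormedRing A] [NormedAlgebra 𝕜 A] {l : Filter α} {φ : α → 𝕜} {F w : α → A} {c : A}
    (hF : (fun x => F x - φ x • c) =o[l] φ) (hw : Tendsto w l (𝓝 1)) :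
    (fun x => F x * w x - φ x • c) =o[l] φ := by
  have hw₁ : (fun x => c * (w x - 1)) =o[l] fun _ => (1 : 𝕜) :=
    (isLittleO_one_iff 𝕜).2 (by simpa using (hw.sub_const 1).const_mul c)
  refine ((hF.mul_isBigO (hw.isBigO_one 𝕜)).add ((isBigO_refl φ l).smul_isLittleO hw₁)).congr
    (fun x => ?_) (fun x => by simp)
  simp only [sub_mul, mul_sub, smul_sub, smul_mul_assoc, mul_one]
  abel

theorem mul_mul_mul_sub_one_of_mul_eq_one {R : Type*} [Ring R] {a b a' b' : R}
    (ha : a * a' = 1) (hb : b * b' = 1) :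
    a * b * a' * b' - 1 = (a * b - b * a) * (a' * b') := by
  have hba : b * a * (a' * b') = 1 := by
    rw [mul_assoc, ← mul_assoc a, ha, one_mul, hb]
  rw [sub_mul, hba, ← mul_assoc]

/-- In a Banach algebra, the group commutator of exponentials satisfies
`exp(tA)exp(tB)exp(−tA)exp(−tB) = 1 + t²[A,B] + o(t²)` as `t → 0`. -/
theorem exp_group_commutator_second_order {A : Type*} [NormedRing A]
    [NormedAlgebra ℝ A] [CompleteSpace A] (X Y : A) :
    Tendsto (fun t : ℝ => (t ^ 2)⁻¹ •
        (NormedSpace.exp (t • X) * NormedSpace.exp (t • Y) * NormedSpace.exp (-(t • X)) * NormedSpace.exp (-(t • Y)) -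
          1 - (t ^ 2) • (X * Y - Y * X)))
      (𝓝[≠] (0 : ℝ)) (𝓝 0) := by
  let +nondep : NormedAlgebra ℚ A := .restrictScalars ℚ ℝ A
  have hexp (Z : A) := isBigO_exp_smul_sub_one_sub_smul (𝕜 := ℝ) Z
  have hinv (x : A) : exp x * exp (-x) = 1 := by
    rw [← exp_add_of_commute (Commute.refl x).neg_right, add_neg_cancel, exp_zero]
  have hw : Tendsto (fun t : ℝ => exp (-(t • X)) * exp (-(t • Y))) (𝓝 0) (𝓝 1) := by
    have hneg (Z : A) : Tendsto (fun t : ℝ => -(t • Z)) (𝓝 0) (𝓝 (-((0 : ℝ) • Z))) :=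
      (tendsto_id.smul_const Z).neg
    simpa using (hneg X).exp.mul (hneg Y).exp
  have hcomm := isLittleO_commutator_sub_sq_smul_commutator (hexp X) (hexp Y)
  refine ((hcomm.mul_tendsto_one_sub_smul hw).congr_left fun t => ?_).tendsto_inv_smul_nhds_zero
    |>.mono_left nhdsWithin_le_nhds
  rw [mul_mul_mul_sub_one_of_mul_eq_one (hinv _) (hinv _)]
end
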